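/- arXiv:1109.5222 — 14 statements merged into one kernel-verified Lean document; each statement's English description precedes it below -/
import Mathlib

section
/- For any P₁, P₂ > 0 and any c with 0 < c < 1, the set of pairs (R₁, R₂) ∈ ℝ² with R₁ ≥ 0, R₂ ≥ 0 such that (R₁, max{(1/c)·R₂ − (1/c − 1)·γ(P₂), 0}) ∈ C₁ is equal to the set {(R₁, R₂) ∈ ℝ² : 0 ≤ R₁ ≤ γ(P₁), 0 ≤ R₂ ≤ γ(P₂), R₁ + (1/c)·R₂ ≤ (1/c − 1)·γ(P₂) + γ(P₁+P₂)}. -/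
/-- γ(x) = (1/2)·log₂(1+x). -/
noncomputable def gam (x : ℝ) : ℝ := (1/2) * Real.logb 2 (1 + x)

/-- The standard two-user Gaussian MAC capacity region. -/
def C1 (P₁ P₂ : ℝ) : Set (ℝ × ℝ) :=
  {r : ℝ × ℝ | 0 ≤ r.1 ∧ r.1 ≤ gam P₁ ∧ 0 ≤ r.2 ∧ r.2 ≤ gam P₂ ∧
    r.1 + r.2 ≤ gam (P₁ + P₂)}

/-!
Write `a = 1/c > 0`. The constraint `max (a R₂ - (a - 1) γ(P₂)) 0 ≤ γ(P₂)` is equivalent to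
`R₂ ≤ γ(P₂)`, since `γ(P₂) ≥ 0` and the first entry of the max is `γ(P₂) + a (R₂ - γ(P₂))`.
The sum constraint `R₁ + max x 0 ≤ γ(P₁+P₂)` splits into `R₁ + x ≤ γ(P₁+P₂)`, which is the
new sum constraint, and `R₁ ≤ γ(P₁+P₂)`, which follows from `R₁ ≤ γ(P₁)` by monotonicity of γ.
-/

lemma gam_nonneg {x : ℝ} (hx : 0 ≤ x) : 0 ≤ gam x :=
  mul_nonneg (by norm_num) (Real.logb_nonneg (by norm_num) (by linarith))

lemma gam_le_gam {x y : ℝ} (hx : -1 < x) (hxy : x ≤ y) : gam x ≤ gam y := by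
  unfold gam
  gcongr
  · norm_num
  · linarith

lemma max_affine_zero_le_iff {a r g : ℝ} (ha : 0 < a) (hg : 0 ≤ g) :
    max (a * r - (a - 1) * g) 0 ≤ g ↔ r ≤ g := by
  have key : a * r - (a - 1) * g ≤ g ↔ r ≤ g :=
    calc _ ↔ a * r ≤ a * g := by constructor <;> intro h <;> linarith
      _ ↔ r ≤ g := mul_le_mul_iff_of_pos_left ha
  simp only [max_le_iff, key, hg, and_true]

lemma add_max_zero_le_iff {r x b : ℝ} : r + max x 0 ≤ b ↔ r + x ≤ b ∧ r ≤ b := by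
  rw [← max_add_add_left, add_zero, max_le_iff]

theorem stmt_0_general (P₁ P₂ c : ℝ) (hP₁ : 0 < P₁) (hP₂ : 0 < P₂)
    (hc0 : 0 < c) :
    {R : ℝ × ℝ | 0 ≤ R.1 ∧ 0 ≤ R.2 ∧
      (R.1, max ((1/c) * R.2 - (1/c - 1) * gam P₂) 0) ∈ C1 P₁ P₂} =
    {R : ℝ × ℝ | 0 ≤ R.1 ∧ R.1 ≤ gam P₁ ∧ 0 ≤ R.2 ∧ R.2 ≤ gam P₂ ∧
      R.1 + (1/c) * R.2 ≤ (1/c - 1) * gam P₂ + gam (P₁ + P₂)} := by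
  have hγ₂ : 0 ≤ gam P₂ := gam_nonneg hP₂.le
  have hγ₁₂ : gam P₁ ≤ gam (P₁ + P₂) := gam_le_gam (by linarith) (by linarith)
  ext ⟨R₁, R₂⟩
  simp only [C1, Set.mem_ofPred_eq, le_max_right, true_and, add_max_zero_le_iff,
    max_affine_zero_le_iff (one_div_pos.2 hc0) hγ₂]
  constructor
  · rintro ⟨hR₁, hR₂, -, hR₁γ, hR₂γ, hsum, -⟩
    exact ⟨hR₁, hR₁γ, hR₂, hR₂γ, by linarith⟩
  · rintro ⟨hR₁, hR₁γ, hR₂, hR₂γ, hsum⟩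
    exact ⟨hR₁, hR₂, hR₁, hR₁γ, hR₂γ, by linarith, hR₁γ.trans hγ₁₂⟩

theorem stmt_0 (P₁ P₂ c : ℝ) (hP₁ : 0 < P₁) (hP₂ : 0 < P₂)
    (hc0 : 0 < c) (hc1 : c < 1) :
    {R : ℝ × ℝ | 0 ≤ R.1 ∧ 0 ≤ R.2 ∧
      (R.1, max ((1/c) * R.2 - (1/c - 1) * gam P₂) 0) ∈ C1 P₁ P₂} =
    {R : ℝ × ℝ | 0 ≤ R.1 ∧ R.1 ≤ gam P₁ ∧ 0 ≤ R.2 ∧ R.2 ≤ gam P₂ ∧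
      R.1 + (1/c) * R.2 ≤ (1/c - 1) * gam P₂ + gam (P₁ + P₂)} :=
  stmt_0_general P₁ P₂ c hP₁ hP₂ hc0
end

section
/- For any P₁, P₂ > 0 and any c with c > 1, the set of pairs (R₁, R₂) ∈ ℝ² with R₁ ≥ 0, R₂ ≥ 0 such that (max{c·R₁ − (c − 1)·γ(P₁), 0}, R₂) ∈ C₁ is equal to the set {(R₁, R₂) ∈ ℝ² : 0 ≤ R₁ ≤ γ(P₁), 0 ≤ R₂ ≤ γ(P₂), c·R₁ + R₂ ≤ (c − 1)·γ(P₁) + γ(P₁+P₂)}. -/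
theorem stmt_1 (P₁ P₂ c : ℝ) (hP₁ : 0 < P₁) (hP₂ : 0 < P₂) (hc : 1 < c) :
    {R : ℝ × ℝ | 0 ≤ R.1 ∧ 0 ≤ R.2 ∧
      (max (c * R.1 - (c - 1) * gam P₁) 0, R.2) ∈ C1 P₁ P₂} =
    {R : ℝ × ℝ | 0 ≤ R.1 ∧ R.1 ≤ gam P₁ ∧ 0 ≤ R.2 ∧ R.2 ≤ gam P₂ ∧
      c * R.1 + R.2 ≤ (c - 1) * gam P₁ + gam (P₁ + P₂)} := by
  have hg1 : 0 ≤ gam P₁ := by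
    have : (0:ℝ) ≤ Real.logb 2 (1 + P₁) :=
      Real.logb_nonneg one_lt_two (by linarith)
    unfold gam; linarith
  have hmono : gam P₂ ≤ gam (P₁ + P₂) := by
    have : Real.logb 2 (1 + P₂) ≤ Real.logb 2 (1 + (P₁ + P₂)) :=
      Real.logb_le_logb_of_le one_lt_two (by linarith) (by linarith)
    unfold gam; linarith
  ext R
  simp only [Set.mem_setOf_eq, C1]
  constructor
  · rintro ⟨h1, h2, _, hm1, _, hR2, hsum⟩
    have hle : c * R.1 - (c - 1) * gam P₁ ≤ max (c * R.1 - (c - 1) * gam P₁) 0 :=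
      le_max_left _ _
    refine ⟨h1, ?_, h2, hR2, ?_⟩
    · nlinarith
    · linarith
  · rintro ⟨h1, hR1, h2, hR2, hsum⟩
    refine ⟨h1, h2, le_max_right _ _, ?_, h2, hR2, ?_⟩
    · apply max_le ?_ hg1
      nlinarith
    · rcases max_cases (c * R.1 - (c - 1) * gam P₁) 0 with ⟨heq, _⟩ | ⟨heq, _⟩ <;>
        rw [heq] <;> linarith
end

section
/- Let P₁, P₂, τ₁, τ₂ > 0 satisfy τ₂·γ(P₁) ≤ τ₁·(γ(P₁+P₂) − γ(P₁)) (Case I), and let w ∈ [0,1]. Then for every (r₁, r₂) ∈ C₁ with r₁ > 0 and τ₁·r₂ ≤ τ₂·r₁, one has D₁(γ(P₁), (τ₂/τ₁)·γ(P₁)) ≤ D₁(r₁, r₂), where D₁(r₁, r₂) = (1−w)·τ₂/γ(P₂) + τ₁·(γ(P₂) − (1−w)·r₂)/(γ(P₂)·r₁). -/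
/-- D₁(r₁, r₂) = (1−w)·τ₂/γ(P₂) + τ₁·(γ(P₂) − (1−w)·r₂)/(γ(P₂)·r₁). -/
noncomputable def D1 (w τ₁ τ₂ P₂ r₁ r₂ : ℝ) : ℝ :=
  (1 - w) * τ₂ / gam P₂ + τ₁ * (gam P₂ - (1 - w) * r₂) / (gam P₂ * r₁)

/-! Minimising `D1` below the line `τ₁ r₂ = τ₂ r₁` splits into two independent monotonicity
facts once `D1` is written as `τ₁ / r₁ + (1 - w) (τ₂ - τ₁ r₂ / r₁) / γ(P₂)`: the first term
decreases in `r₁ ≤ γ(P₁)`, and the second is nonnegative below the line and vanishes on it. -/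

lemma gam_pos {x : ℝ} (hx : 0 < x) : 0 < gam x := by
  unfold gam
  have := Real.logb_pos one_lt_two (by linarith : (1 : ℝ) < 1 + x)
  positivity

lemma D1_eq {w τ₁ τ₂ P₂ r₁ r₂ : ℝ} (hG : gam P₂ ≠ 0) (hr₁ : r₁ ≠ 0) :
    D1 w τ₁ τ₂ P₂ r₁ r₂ = τ₁ / r₁ + (1 - w) * (τ₂ - τ₁ * r₂ / r₁) / gam P₂ := by
  unfold D1
  field_simp
  ring

lemma D1_on_ray {w τ₁ τ₂ P₂ r₁ : ℝ} (hG : gam P₂ ≠ 0) (hτ₁ : τ₁ ≠ 0) (hr₁ : r₁ ≠ 0) :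
    D1 w τ₁ τ₂ P₂ r₁ ((τ₂ / τ₁) * r₁) = τ₁ / r₁ := by
  rw [D1_eq hG hr₁]
  field_simp
  ring

theorem stmt_4_general (P₁ P₂ τ₁ τ₂ w : ℝ) (hP₂ : 0 < P₂)
    (hτ₁ : 0 < τ₁)
    (hw : w ∈ Set.Icc (0:ℝ) 1) :
    ∀ r₁ r₂ : ℝ, (r₁, r₂) ∈ C1 P₁ P₂ → 0 < r₁ → τ₁ * r₂ ≤ τ₂ * r₁ →
      D1 w τ₁ τ₂ P₂ (gam P₁) ((τ₂ / τ₁) * gam P₁) ≤ D1 w τ₁ τ₂ P₂ r₁ r₂ := by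
  rintro r₁ r₂ ⟨-, hr₁_le, -⟩ hr₁ hbelow
  have hG := gam_pos hP₂
  have hg₁ : 0 < gam P₁ := hr₁.trans_le hr₁_le
  rw [D1_on_ray hG.ne' hτ₁.ne' hg₁.ne', D1_eq hG.ne' hr₁.ne']
  have hgap : 0 ≤ τ₂ - τ₁ * r₂ / r₁ := by
    rw [sub_nonneg, div_le_iff₀ hr₁]
    exact hbelow
  have hw₁ : 0 ≤ 1 - w := sub_nonneg.mpr hw.2
  calc τ₁ / gam P₁ ≤ τ₁ / r₁ := div_le_div_of_nonneg_left hτ₁.le hr₁ hr₁_le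
    _ ≤ τ₁ / r₁ + (1 - w) * (τ₂ - τ₁ * r₂ / r₁) / gam P₂ :=
      le_add_of_nonneg_right (by positivity)

theorem stmt_4 (P₁ P₂ τ₁ τ₂ w : ℝ) (hP₁ : 0 < P₁) (hP₂ : 0 < P₂)
    (hτ₁ : 0 < τ₁) (hτ₂ : 0 < τ₂)
    (hcase : τ₂ * gam P₁ ≤ τ₁ * (gam (P₁ + P₂) - gam P₁))
    (hw : w ∈ Set.Icc (0:ℝ) 1) :
    ∀ r₁ r₂ : ℝ, (r₁, r₂) ∈ C1 P₁ P₂ → 0 < r₁ → τ₁ * r₂ ≤ τ₂ * r₁ →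
      D1 w τ₁ τ₂ P₂ (gam P₁) ((τ₂ / τ₁) * gam P₁) ≤ D1 w τ₁ τ₂ P₂ r₁ r₂ :=
  stmt_4_general P₁ P₂ τ₁ τ₂ w hP₂ hτ₁ hw
end

section
/- Let P₁, P₂, τ₁, τ₂ > 0 satisfy τ₁·(γ(P₁+P₂) − γ(P₁)) < τ₂·γ(P₁) and τ₂·(γ(P₁+P₂) − γ(P₂)) < τ₁·γ(P₂) (Case II), and set w₁ = (γ(P₁+P₂) − γ(P₂))/γ(P₁+P₂), C = ((τ₁/(τ₁+τ₂))·γ(P₁+P₂), (τ₂/(τ₁+τ₂))·γ(P₁+P₂)), B = (γ(P₁), γ(P₁+P₂) − γ(P₁)). Let D₁(r₁, r₂) = (1−w)·τ₂/γ(P₂) + τ₁·(γ(P₂) − (1−w)·r₂)/(γ(P₂)·r₁). Then for every (r₁, r₂) ∈ C₁ with r₁ > 0 and τ₁·r₂ ≤ τ₂·r₁: if w ∈ [0, w₁] then D₁(C) ≤ D₁(r₁, r₂), and if w ∈ [w₁, 1] then D₁(B) ≤ D₁(r₁, r₂). -/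
lemma D1_le_D1_of_div_le {w τ₁ τ₂ P₂ a₁ a₂ r₁ r₂ : ℝ} (hτ₁ : 0 ≤ τ₁) (hg : 0 < gam P₂)
    (h : (gam P₂ - (1 - w) * a₂) / a₁ ≤ (gam P₂ - (1 - w) * r₂) / r₁) :
    D1 w τ₁ τ₂ P₂ a₁ a₂ ≤ D1 w τ₁ τ₂ P₂ r₁ r₂ := by
  have hform : ∀ x y : ℝ, τ₁ * (gam P₂ - (1 - w) * y) / (gam P₂ * x) =
      τ₁ / gam P₂ * ((gam P₂ - (1 - w) * y) / x) := fun _ _ =>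
    mul_div_mul_comm _ _ _ _
  unfold D1
  rw [hform, hform]
  gcongr

lemma div_le_div_of_ratio_vertex {τ₁ τ₂ g c s r₁ r₂ : ℝ} (hτ₁ : 0 < τ₁) (hτ₂ : 0 ≤ τ₂)
    (hg : 0 ≤ g) (hc : 0 < c) (hr₁ : 0 < r₁) (hgs : g ≤ s * c)
    (hsum : r₁ + r₂ ≤ c) (hratio : τ₁ * r₂ ≤ τ₂ * r₁) :
    (g - s * (τ₂ / (τ₁ + τ₂) * c)) / (τ₁ / (τ₁ + τ₂) * c) ≤ (g - s * r₂) / r₁ := by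
  have hT : 0 < τ₁ + τ₂ := by linarith
  rw [div_le_div_iff₀ (by positivity) hr₁, ← sub_nonneg]
  have key : (g - s * r₂) * (τ₁ / (τ₁ + τ₂) * c) - (g - s * (τ₂ / (τ₁ + τ₂) * c)) * r₁ =
      (g * τ₁ * (c - r₁ - r₂) + (s * c - g) * (τ₂ * r₁ - τ₁ * r₂)) / (τ₁ + τ₂) := by
    field_simp
    ring
  rw [key]
  have := mul_nonneg (sub_nonneg.2 hgs) (sub_nonneg.2 hratio)
  have : 0 ≤ g * τ₁ * (c - r₁ - r₂) := by
    have : 0 ≤ c - r₁ - r₂ := by linarith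
    positivity
  positivity

lemma div_le_div_of_corner_vertex {g g₁ c s r₁ r₂ : ℝ} (hs : 0 ≤ s) (hgs : s * c ≤ g)
    (hr₁ : 0 < r₁) (hr₁g₁ : r₁ ≤ g₁) (hsum : r₁ + r₂ ≤ c) :
    (g - s * (c - g₁)) / g₁ ≤ (g - s * r₂) / r₁ := by
  rw [div_le_div_iff₀ (by linarith) hr₁, ← sub_nonneg]
  have key : (g - s * r₂) * g₁ - (g - s * (c - g₁)) * r₁ =
      (g - s * c) * (g₁ - r₁) + s * g₁ * (c - r₁ - r₂) := by
    ring
  rw [key]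
  have := mul_nonneg (sub_nonneg.2 hgs) (sub_nonneg.2 hr₁g₁)
  have : 0 ≤ s * g₁ * (c - r₁ - r₂) :=
    mul_nonneg (mul_nonneg hs (by linarith)) (by linarith)
  linarith

theorem stmt_5_general (P₁ P₂ τ₁ τ₂ w : ℝ) (hP₁ : 0 < P₁) (hP₂ : 0 < P₂)
    (hτ₁ : 0 < τ₁) (hτ₂ : 0 < τ₂) :
    ∀ r₁ r₂ : ℝ, (r₁, r₂) ∈ C1 P₁ P₂ → 0 < r₁ → τ₁ * r₂ ≤ τ₂ * r₁ →
      (w ∈ Set.Icc (0:ℝ) ((gam (P₁ + P₂) - gam P₂) / gam (P₁ + P₂)) →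
        D1 w τ₁ τ₂ P₂ ((τ₁ / (τ₁ + τ₂)) * gam (P₁ + P₂))
          ((τ₂ / (τ₁ + τ₂)) * gam (P₁ + P₂)) ≤ D1 w τ₁ τ₂ P₂ r₁ r₂) ∧
      (w ∈ Set.Icc ((gam (P₁ + P₂) - gam P₂) / gam (P₁ + P₂)) 1 →
        D1 w τ₁ τ₂ P₂ (gam P₁) (gam (P₁ + P₂) - gam P₁) ≤ D1 w τ₁ τ₂ P₂ r₁ r₂) := by
  have hg₂ : 0 < gam P₂ := gam_pos hP₂
  have hg₁₂ : 0 < gam (P₁ + P₂) := gam_pos (by linarith)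
  rintro r₁ r₂ ⟨-, hr₁g₁, -, -, hsum⟩ hr₁ hratio
  refine ⟨fun ⟨_, hw⟩ => D1_le_D1_of_div_le hτ₁.le hg₂ ?_,
    fun ⟨hw, hw1⟩ => D1_le_D1_of_div_le hτ₁.le hg₂ ?_⟩
  · have hgs : gam P₂ ≤ (1 - w) * gam (P₁ + P₂) := by
      rw [le_div_iff₀ hg₁₂] at hw
      linarith
    exact div_le_div_of_ratio_vertex hτ₁ hτ₂.le hg₂.le hg₁₂ hr₁ hgs hsum hratio
  · have hgs : (1 - w) * gam (P₁ + P₂) ≤ gam P₂ := by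
      rw [div_le_iff₀ hg₁₂] at hw
      linarith
    exact div_le_div_of_corner_vertex (by linarith) hgs hr₁ hr₁g₁ hsum

theorem stmt_5 (P₁ P₂ τ₁ τ₂ w : ℝ) (hP₁ : 0 < P₁) (hP₂ : 0 < P₂)
    (hτ₁ : 0 < τ₁) (hτ₂ : 0 < τ₂)
    (hcaseA : τ₁ * (gam (P₁ + P₂) - gam P₁) < τ₂ * gam P₁)
    (hcaseB : τ₂ * (gam (P₁ + P₂) - gam P₂) < τ₁ * gam P₂) :
    ∀ r₁ r₂ : ℝ, (r₁, r₂) ∈ C1 P₁ P₂ → 0 < r₁ → τ₁ * r₂ ≤ τ₂ * r₁ →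
      (w ∈ Set.Icc (0:ℝ) ((gam (P₁ + P₂) - gam P₂) / gam (P₁ + P₂)) →
        D1 w τ₁ τ₂ P₂ ((τ₁ / (τ₁ + τ₂)) * gam (P₁ + P₂))
          ((τ₂ / (τ₁ + τ₂)) * gam (P₁ + P₂)) ≤ D1 w τ₁ τ₂ P₂ r₁ r₂) ∧
      (w ∈ Set.Icc ((gam (P₁ + P₂) - gam P₂) / gam (P₁ + P₂)) 1 →
        D1 w τ₁ τ₂ P₂ (gam P₁) (gam (P₁ + P₂) - gam P₁) ≤ D1 w τ₁ τ₂ P₂ r₁ r₂) :=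
  stmt_5_general P₁ P₂ τ₁ τ₂ w hP₁ hP₂ hτ₁ hτ₂
end

section
/- Let P₁, P₂, τ₁, τ₂ > 0 satisfy τ₁·γ(P₂) ≤ τ₂·(γ(P₁+P₂) − γ(P₂)) (Case III), and set w₁ = (γ(P₁+P₂) − γ(P₂))/γ(P₁+P₂), A = (γ(P₁+P₂) − γ(P₂), γ(P₂)), B = (γ(P₁), γ(P₁+P₂) − γ(P₁)). Let D₁(r₁, r₂) = (1−w)·τ₂/γ(P₂) + τ₁·(γ(P₂) − (1−w)·r₂)/(γ(P₂)·r₁). Then for every (r₁, r₂) ∈ C₁ with r₁ > 0 and τ₁·r₂ ≤ τ₂·r₁: if w ∈ [0, w₁] then D₁(A) ≤ D₁(r₁, r₂), and if w ∈ [w₁, 1] then D₁(B) ≤ D₁(r₁, r₂). -/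
/-!
On the capacity region the second summand of `D1` is the linear-fractional function
`(γ(P₂) - (1 - w) r₂) / r₁`, so `D1 (corner) ≤ D1 (r₁, r₂)` is, after cross-multiplying, a linear
inequality in `(r₁, r₂)`. It holds on the whole region because it is a nonnegative combination of
the two facets through the corner: `r₁ + r₂ ≤ γ(P₁+P₂)` and `r₂ ≤ γ(P₂)` at `A`, `r₁ + r₂ ≤ γ(P₁+P₂)`
and `r₁ ≤ γ(P₁)` at `B`. The threshold `w₁` is exactly where both coefficients stay nonnegative.
-/

lemma gam_zero : gam 0 = 0 := by
  simp [gam]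

lemma gam_strictMonoOn : StrictMonoOn gam (Set.Ioi (-1)) := by
  intro x hx y _ hxy
  have hx' : (0 : ℝ) < 1 + x := by linarith [Set.mem_Ioi.1 hx]
  have := Real.logb_lt_logb (b := 2) one_lt_two hx' (by linarith : 1 + x < 1 + y)
  unfold gam
  linarith

section CornerInequalities

variable {g₁ g₂ g₁₂ r₁ r₂ w : ℝ}

lemma cornerA_inequality (hw₀ : 0 ≤ w) (hg₂ : 0 ≤ g₂) (hw : w * g₁₂ ≤ g₁₂ - g₂)
    (hr₂ : r₂ ≤ g₂) (hsum : r₁ + r₂ ≤ g₁₂) :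
    (g₂ - (1 - w) * g₂) * r₁ ≤ (g₁₂ - g₂) * (g₂ - (1 - w) * r₂) := by
  nlinarith [mul_nonneg (mul_nonneg hw₀ hg₂) (sub_nonneg.2 hsum),
    mul_nonneg (sub_nonneg.2 hw) (sub_nonneg.2 hr₂)]

lemma cornerB_inequality (hw₁ : w ≤ 1) (hg₁ : 0 ≤ g₁) (hw : g₁₂ - g₂ ≤ w * g₁₂)
    (hr₁ : r₁ ≤ g₁) (hsum : r₁ + r₂ ≤ g₁₂) :
    (g₂ - (1 - w) * (g₁₂ - g₁)) * r₁ ≤ g₁ * (g₂ - (1 - w) * r₂) := by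
  nlinarith [mul_nonneg (mul_nonneg hg₁ (sub_nonneg.2 hw₁)) (sub_nonneg.2 hsum),
    mul_nonneg (sub_nonneg.2 hw) (sub_nonneg.2 hr₁)]

end CornerInequalities

lemma D1_le_D1_of_mul_le {w τ₁ τ₂ P₂ a b r₁ r₂ : ℝ} (hτ₁ : 0 ≤ τ₁) (hP₂ : 0 < gam P₂)
    (ha : 0 < a) (hr₁ : 0 < r₁)
    (h : (gam P₂ - (1 - w) * b) * r₁ ≤ a * (gam P₂ - (1 - w) * r₂)) :
    D1 w τ₁ τ₂ P₂ a b ≤ D1 w τ₁ τ₂ P₂ r₁ r₂ := by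
  have hfrac : (gam P₂ - (1 - w) * b) / (gam P₂ * a) ≤ (gam P₂ - (1 - w) * r₂) / (gam P₂ * r₁) := by
    rw [div_le_div_iff₀ (by positivity) (by positivity)]
    nlinarith [mul_le_mul_of_nonneg_left h hP₂.le]
  unfold D1
  simp only [mul_div_assoc]
  gcongr

theorem stmt_6_general (P₁ P₂ τ₁ τ₂ w : ℝ) (hP₁ : 0 < P₁) (hP₂ : 0 < P₂)
    (hτ₁ : 0 < τ₁) :
    ∀ r₁ r₂ : ℝ, (r₁, r₂) ∈ C1 P₁ P₂ → 0 < r₁ → τ₁ * r₂ ≤ τ₂ * r₁ →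
      (w ∈ Set.Icc (0:ℝ) ((gam (P₁ + P₂) - gam P₂) / gam (P₁ + P₂)) →
        D1 w τ₁ τ₂ P₂ (gam (P₁ + P₂) - gam P₂) (gam P₂) ≤ D1 w τ₁ τ₂ P₂ r₁ r₂) ∧
      (w ∈ Set.Icc ((gam (P₁ + P₂) - gam P₂) / gam (P₁ + P₂)) 1 →
        D1 w τ₁ τ₂ P₂ (gam P₁) (gam (P₁ + P₂) - gam P₁) ≤ D1 w τ₁ τ₂ P₂ r₁ r₂) := by
  rintro r₁ r₂ ⟨-, hr₁g, -, hr₂g, hsum⟩ hr₁ -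
  have hg₁ := gam_pos hP₁
  have hg₂ := gam_pos hP₂
  have hg₂₁₂ : gam P₂ < gam (P₁ + P₂) :=
    gam_strictMonoOn (Set.mem_Ioi.2 (by linarith)) (Set.mem_Ioi.2 (by linarith)) (by linarith)
  have hg₁₂ := hg₂.trans hg₂₁₂
  refine ⟨fun ⟨hw₀, hw⟩ => ?_, fun ⟨hw, hw₁⟩ => ?_⟩
  · exact D1_le_D1_of_mul_le hτ₁.le hg₂ (sub_pos.2 hg₂₁₂) hr₁ <|
      cornerA_inequality hw₀ hg₂.le ((le_div_iff₀ hg₁₂).1 hw) hr₂g hsum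
  · exact D1_le_D1_of_mul_le hτ₁.le hg₂ hg₁ hr₁ <|
      cornerB_inequality hw₁ hg₁.le ((div_le_iff₀ hg₁₂).1 hw) hr₁g hsum

theorem stmt_6 (P₁ P₂ τ₁ τ₂ w : ℝ) (hP₁ : 0 < P₁) (hP₂ : 0 < P₂)
    (hτ₁ : 0 < τ₁) (hτ₂ : 0 < τ₂)
    (hcase : τ₁ * gam P₂ ≤ τ₂ * (gam (P₁ + P₂) - gam P₂)) :
    ∀ r₁ r₂ : ℝ, (r₁, r₂) ∈ C1 P₁ P₂ → 0 < r₁ → τ₁ * r₂ ≤ τ₂ * r₁ →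
      (w ∈ Set.Icc (0:ℝ) ((gam (P₁ + P₂) - gam P₂) / gam (P₁ + P₂)) →
        D1 w τ₁ τ₂ P₂ (gam (P₁ + P₂) - gam P₂) (gam P₂) ≤ D1 w τ₁ τ₂ P₂ r₁ r₂) ∧
      (w ∈ Set.Icc ((gam (P₁ + P₂) - gam P₂) / gam (P₁ + P₂)) 1 →
        D1 w τ₁ τ₂ P₂ (gam P₁) (gam (P₁ + P₂) - gam P₁) ≤ D1 w τ₁ τ₂ P₂ r₁ r₂) :=
  stmt_6_general P₁ P₂ τ₁ τ₂ w hP₁ hP₂ hτ₁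
end

section
/- Let P₁, P₂, τ₁, τ₂ > 0 satisfy τ₂·γ(P₁) ≤ τ₁·(γ(P₁+P₂) − γ(P₁)) (Case I), and set w₂ = γ(P₁)/γ(P₁+P₂), A = (γ(P₁+P₂) − γ(P₂), γ(P₂)), B = (γ(P₁), γ(P₁+P₂) − γ(P₁)). Let D₂(r₁, r₂) = w·τ₁/γ(P₁) + τ₂·(γ(P₁) − w·r₁)/(γ(P₁)·r₂). Then for every (r₁, r₂) ∈ C₁ with r₂ > 0 and τ₁·r₂ ≥ τ₂·r₁: if w ∈ [0, w₂] then D₂(A) ≤ D₂(r₁, r₂), and if w ∈ [w₂, 1] then D₂(B) ≤ D₂(r₁, r₂). -/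
/-- D₂(r₁, r₂) = w·τ₁/γ(P₁) + τ₂·(γ(P₁) − w·r₁)/(γ(P₁)·r₂). -/
noncomputable def D2 (w τ₁ τ₂ P₁ r₁ r₂ : ℝ) : ℝ :=
  w * τ₁ / gam P₁ + τ₂ * (gam P₁ - w * r₁) / (gam P₁ * r₂)

lemma gam_lt_gam {x y : ℝ} (hx : -1 < x) (hxy : x < y) : gam x < gam y := by
  unfold gam
  gcongr
  · norm_num
  · linarith

lemma D2_le_D2_of_div_le {w τ₁ τ₂ P₁ a₁ a₂ r₁ r₂ : ℝ} (hτ₂ : 0 ≤ τ₂) (hg : 0 ≤ gam P₁)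
    (h : (gam P₁ - w * a₁) / a₂ ≤ (gam P₁ - w * r₁) / r₂) :
    D2 w τ₁ τ₂ P₁ a₁ a₂ ≤ D2 w τ₁ τ₂ P₁ r₁ r₂ := by
  have hD2 : ∀ s₁ s₂, D2 w τ₁ τ₂ P₁ s₁ s₂ =
      w * τ₁ / gam P₁ + τ₂ / gam P₁ * ((gam P₁ - w * s₁) / s₂) := by
    intro s₁ s₂
    rw [D2, div_mul_div_comm]
  rw [hD2, hD2]
  gcongr

section Corners

variable {g b c w r₁ r₂ : ℝ}

lemma corner_A_div_le (hw₀ : 0 ≤ w) (hw : w * c ≤ g) (hr₂ : 0 < r₂) (hr₂b : r₂ ≤ b)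
    (hsum : r₁ + r₂ ≤ c) :
    (g - w * (c - b)) / b ≤ (g - w * r₁) / r₂ := by
  have hb : 0 < b := hr₂.trans_le hr₂b
  calc (g - w * (c - b)) / b
      = (g - w * c) / b + w := by field_simp; ring
    _ ≤ (g - w * c) / r₂ + w := by gcongr
    _ = (g - w * (c - r₂)) / r₂ := by field_simp; ring
    _ ≤ (g - w * r₁) / r₂ := by gcongr; linarith

lemma corner_B_div_le (hw₁ : w ≤ 1) (hw : g ≤ w * c) (hg : 0 ≤ g) (hgc : g < c)
    (hr₁ : r₁ ≤ g) (hr₂ : 0 < r₂) (hsum : r₁ + r₂ ≤ c) :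
    (g - w * g) / (c - g) ≤ (g - w * r₁) / r₂ := by
  rw [div_le_div_iff₀ (by linarith) hr₂]
  linear_combination mul_nonneg (mul_nonneg (sub_nonneg.2 hw₁) hg) (sub_nonneg.2 hsum) +
    mul_nonneg (sub_nonneg.2 hw) (sub_nonneg.2 hr₁)

end Corners

theorem stmt_7_general (P₁ P₂ τ₁ τ₂ w : ℝ) (hP₁ : 0 < P₁) (hP₂ : 0 < P₂)
    (hτ₂ : 0 < τ₂) :
    ∀ r₁ r₂ : ℝ, (r₁, r₂) ∈ C1 P₁ P₂ → 0 < r₂ → τ₂ * r₁ ≤ τ₁ * r₂ →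
      (w ∈ Set.Icc (0:ℝ) (gam P₁ / gam (P₁ + P₂)) →
        D2 w τ₁ τ₂ P₁ (gam (P₁ + P₂) - gam P₂) (gam P₂) ≤ D2 w τ₁ τ₂ P₁ r₁ r₂) ∧
      (w ∈ Set.Icc (gam P₁ / gam (P₁ + P₂)) 1 →
        D2 w τ₁ τ₂ P₁ (gam P₁) (gam (P₁ + P₂) - gam P₁) ≤ D2 w τ₁ τ₂ P₁ r₁ r₂) := by
  rintro r₁ r₂ ⟨-, hr₁, -, hr₂b, hsum⟩ hr₂ -
  have hg : 0 < gam P₁ := gam_pos hP₁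
  have hgc : gam P₁ < gam (P₁ + P₂) := gam_lt_gam (by linarith) (by linarith)
  have hc : 0 < gam (P₁ + P₂) := hg.trans hgc
  constructor
  · rintro ⟨hw₀, hw⟩
    exact D2_le_D2_of_div_le hτ₂.le hg.le
      (corner_A_div_le hw₀ ((le_div_iff₀ hc).1 hw) hr₂ hr₂b hsum)
  · rintro ⟨hw, hw₁⟩
    exact D2_le_D2_of_div_le hτ₂.le hg.le
      (corner_B_div_le hw₁ ((div_le_iff₀ hc).1 hw) hg.le hgc hr₁ hr₂ hsum)

theorem stmt_7 (P₁ P₂ τ₁ τ₂ w : ℝ) (hP₁ : 0 < P₁) (hP₂ : 0 < P₂)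
    (hτ₁ : 0 < τ₁) (hτ₂ : 0 < τ₂)
    (hcase : τ₂ * gam P₁ ≤ τ₁ * (gam (P₁ + P₂) - gam P₁)) :
    ∀ r₁ r₂ : ℝ, (r₁, r₂) ∈ C1 P₁ P₂ → 0 < r₂ → τ₂ * r₁ ≤ τ₁ * r₂ →
      (w ∈ Set.Icc (0:ℝ) (gam P₁ / gam (P₁ + P₂)) →
        D2 w τ₁ τ₂ P₁ (gam (P₁ + P₂) - gam P₂) (gam P₂) ≤ D2 w τ₁ τ₂ P₁ r₁ r₂) ∧
      (w ∈ Set.Icc (gam P₁ / gam (P₁ + P₂)) 1 →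
        D2 w τ₁ τ₂ P₁ (gam P₁) (gam (P₁ + P₂) - gam P₁) ≤ D2 w τ₁ τ₂ P₁ r₁ r₂) :=
  stmt_7_general P₁ P₂ τ₁ τ₂ w hP₁ hP₂ hτ₂
end

section
/- Let P₁, P₂, τ₁, τ₂ > 0 satisfy τ₁·(γ(P₁+P₂) − γ(P₁)) < τ₂·γ(P₁) and τ₂·(γ(P₁+P₂) − γ(P₂)) < τ₁·γ(P₂) (Case II), and set w₂ = γ(P₁)/γ(P₁+P₂), A = (γ(P₁+P₂) − γ(P₂), γ(P₂)), C = ((τ₁/(τ₁+τ₂))·γ(P₁+P₂), (τ₂/(τ₁+τ₂))·γ(P₁+P₂)). Let D₂(r₁, r₂) = w·τ₁/γ(P₁) + τ₂·(γ(P₁) − w·r₁)/(γ(P₁)·r₂). Then for every (r₁, r₂) ∈ C₁ with r₂ > 0 and τ₁·r₂ ≥ τ₂·r₁: if w ∈ [0, w₂] then D₂(A) ≤ D₂(r₁, r₂), and if w ∈ [w₂, 1] then D₂(C) ≤ D₂(r₁, r₂). -/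
lemma D2_le_D2_of_sub_mul_le_sub_mul {w τ₁ τ₂ P₁ a₁ a₂ r₁ r₂ : ℝ} (hτ₂ : 0 ≤ τ₂)
    (hg : 0 < gam P₁) (ha₂ : 0 < a₂) (hr₂ : 0 < r₂)
    (h : (gam P₁ - w * a₁) * r₂ ≤ (gam P₁ - w * r₁) * a₂) :
    D2 w τ₁ τ₂ P₁ a₁ a₂ ≤ D2 w τ₁ τ₂ P₁ r₁ r₂ := by
  unfold D2
  gcongr w * τ₁ / gam P₁ + ?_
  rw [div_le_div_iff₀ (by positivity) (by positivity)]
  nlinarith [mul_le_mul_of_nonneg_left h (mul_nonneg hτ₂ hg.le)]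

section SumRateFace

variable {g w s a₁ a₂ r₁ r₂ : ℝ}

lemma mul_sub_mul_le_of_add_le (ha : a₁ + a₂ = s) (hr : r₁ + r₂ ≤ s) (ha₂ : 0 ≤ a₂) :
    r₁ * a₂ - a₁ * r₂ ≤ s * (a₂ - r₂) := by
  subst ha
  nlinarith [mul_nonneg ha₂ (sub_nonneg.mpr hr)]

lemma sub_mul_le_sub_mul_of_mul_le (hw : 0 ≤ w) (hws : w * s ≤ g) (ha : a₁ + a₂ = s)
    (hr : r₁ + r₂ ≤ s) (ha₂ : 0 ≤ a₂) (hr₂ : r₂ ≤ a₂) :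
    (g - w * a₁) * r₂ ≤ (g - w * r₁) * a₂ := by
  have hface := mul_sub_mul_le_of_add_le ha hr ha₂
  nlinarith [mul_le_mul_of_nonneg_left hface hw,
    mul_nonneg (sub_nonneg.mpr hws) (sub_nonneg.mpr hr₂)]

lemma sub_mul_le_sub_mul_of_le_mul (hg : 0 ≤ g) (hw : 0 ≤ w) (hws : g ≤ w * s)
    (ha : a₁ + a₂ = s) (hr : r₁ + r₂ ≤ s) (ha₂ : 0 ≤ a₂) (hcross : r₁ * a₂ ≤ a₁ * r₂) :
    (g - w * a₁) * r₂ ≤ (g - w * r₁) * a₂ := by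
  rcases le_or_gt r₂ a₂ with hle | hlt
  · nlinarith [mul_nonneg hg (sub_nonneg.mpr hle), mul_le_mul_of_nonneg_left hcross hw]
  · have hface := mul_sub_mul_le_of_add_le ha hr ha₂
    nlinarith [mul_le_mul_of_nonneg_left hface hw,
      mul_nonneg (sub_nonneg.mpr hws) (sub_nonneg.mpr hlt.le)]

end SumRateFace

theorem stmt_8_general (P₁ P₂ τ₁ τ₂ w : ℝ) (hP₁ : 0 < P₁) (hP₂ : 0 < P₂)
    (hτ₁ : 0 < τ₁) (hτ₂ : 0 < τ₂) :
    ∀ r₁ r₂ : ℝ, (r₁, r₂) ∈ C1 P₁ P₂ → 0 < r₂ → τ₂ * r₁ ≤ τ₁ * r₂ →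
      (w ∈ Set.Icc (0:ℝ) (gam P₁ / gam (P₁ + P₂)) →
        D2 w τ₁ τ₂ P₁ (gam (P₁ + P₂) - gam P₂) (gam P₂) ≤ D2 w τ₁ τ₂ P₁ r₁ r₂) ∧
      (w ∈ Set.Icc (gam P₁ / gam (P₁ + P₂)) 1 →
        D2 w τ₁ τ₂ P₁ ((τ₁ / (τ₁ + τ₂)) * gam (P₁ + P₂))
          ((τ₂ / (τ₁ + τ₂)) * gam (P₁ + P₂)) ≤ D2 w τ₁ τ₂ P₁ r₁ r₂) := by
  rintro r₁ r₂ ⟨-, -, -, hr₂P₂, hsum⟩ hr₂ hτr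
  have hg₁ := gam_pos hP₁
  have hg₂ := gam_pos hP₂
  have hg₁₂ := gam_pos (add_pos hP₁ hP₂)
  constructor
  · rintro ⟨hw₀, hw⟩
    refine D2_le_D2_of_sub_mul_le_sub_mul hτ₂.le hg₁ hg₂ hr₂ ?_
    exact sub_mul_le_sub_mul_of_mul_le hw₀ ((le_div_iff₀ hg₁₂).mp hw) (sub_add_cancel _ _) hsum
      hg₂.le hr₂P₂
  · rintro ⟨hw, -⟩
    refine D2_le_D2_of_sub_mul_le_sub_mul hτ₂.le hg₁ (by positivity) hr₂ ?_
    have hcross : r₁ * (τ₂ / (τ₁ + τ₂) * gam (P₁ + P₂)) ≤ τ₁ / (τ₁ + τ₂) * gam (P₁ + P₂) * r₂ := by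
      have hτ : 0 < τ₁ + τ₂ := by positivity
      rw [div_mul_eq_mul_div, div_mul_eq_mul_div, mul_div_assoc', div_mul_eq_mul_div,
        div_le_div_iff_of_pos_right hτ]
      nlinarith [mul_le_mul_of_nonneg_right hτr hg₁₂.le]
    refine sub_mul_le_sub_mul_of_le_mul hg₁.le ((div_nonneg hg₁.le hg₁₂.le).trans hw)
      ((div_le_iff₀ hg₁₂).mp hw) ?_ hsum (by positivity) hcross
    rw [← add_mul, ← add_div, div_self (by positivity), one_mul]

theorem stmt_8 (P₁ P₂ τ₁ τ₂ w : ℝ) (hP₁ : 0 < P₁) (hP₂ : 0 < P₂)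
    (hτ₁ : 0 < τ₁) (hτ₂ : 0 < τ₂)
    (hcaseA : τ₁ * (gam (P₁ + P₂) - gam P₁) < τ₂ * gam P₁)
    (hcaseB : τ₂ * (gam (P₁ + P₂) - gam P₂) < τ₁ * gam P₂) :
    ∀ r₁ r₂ : ℝ, (r₁, r₂) ∈ C1 P₁ P₂ → 0 < r₂ → τ₂ * r₁ ≤ τ₁ * r₂ →
      (w ∈ Set.Icc (0:ℝ) (gam P₁ / gam (P₁ + P₂)) →
        D2 w τ₁ τ₂ P₁ (gam (P₁ + P₂) - gam P₂) (gam P₂) ≤ D2 w τ₁ τ₂ P₁ r₁ r₂) ∧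
      (w ∈ Set.Icc (gam P₁ / gam (P₁ + P₂)) 1 →
        D2 w τ₁ τ₂ P₁ ((τ₁ / (τ₁ + τ₂)) * gam (P₁ + P₂))
          ((τ₂ / (τ₁ + τ₂)) * gam (P₁ + P₂)) ≤ D2 w τ₁ τ₂ P₁ r₁ r₂) :=
  stmt_8_general P₁ P₂ τ₁ τ₂ w hP₁ hP₂ hτ₁ hτ₂
end

section
/- Let P₁, P₂, τ₁, τ₂ > 0 satisfy τ₁·γ(P₂) ≤ τ₂·(γ(P₁+P₂) − γ(P₂)) (Case III), set C = ((τ₁/τ₂)·γ(P₂), γ(P₂)), and let w ∈ [0,1]. Let D₂(r₁, r₂) = w·τ₁/γ(P₁) + τ₂·(γ(P₁) − w·r₁)/(γ(P₁)·r₂). Then for every (r₁, r₂) ∈ C₁ with r₂ > 0 and τ₁·r₂ ≥ τ₂·r₁, one has D₂(C) ≤ D₂(r₁, r₂). -/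
lemma D2_eq_add_mul_sub_slope (w τ₁ τ₂ P₁ r₁ r₂ : ℝ) :
    D2 w τ₁ τ₂ P₁ r₁ r₂ =
      w * τ₁ / gam P₁ + τ₂ / gam P₁ * (gam P₁ / r₂ - w * (r₁ / r₂)) := by
  rw [D2, mul_div_mul_comm, sub_div, mul_div_assoc w r₁]

lemma D2_le_D2_of_le_of_slope_le {w τ₁ τ₂ P₁ r₁ r₂ s₁ s₂ : ℝ} (hP₁ : 0 ≤ gam P₁)
    (hτ₂ : 0 ≤ τ₂) (hw : 0 ≤ w) (hr₂ : 0 < r₂) (hrs : r₂ ≤ s₂)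
    (hslope : r₁ / r₂ ≤ s₁ / s₂) :
    D2 w τ₁ τ₂ P₁ s₁ s₂ ≤ D2 w τ₁ τ₂ P₁ r₁ r₂ := by
  rw [D2_eq_add_mul_sub_slope, D2_eq_add_mul_sub_slope]
  gcongr

theorem stmt_9_general (P₁ P₂ τ₁ τ₂ w : ℝ) (hP₁ : 0 < P₁)
    (hτ₂ : 0 < τ₂)
    (hw : w ∈ Set.Icc (0:ℝ) 1) :
    ∀ r₁ r₂ : ℝ, (r₁, r₂) ∈ C1 P₁ P₂ → 0 < r₂ → τ₂ * r₁ ≤ τ₁ * r₂ →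
      D2 w τ₁ τ₂ P₁ ((τ₁ / τ₂) * gam P₂) (gam P₂) ≤ D2 w τ₁ τ₂ P₁ r₁ r₂ := by
  rintro r₁ r₂ ⟨-, -, -, hr₂_le, -⟩ hr₂ hratio
  have hslope : r₁ / r₂ ≤ τ₁ / τ₂ * gam P₂ / gam P₂ := by
    rw [mul_div_cancel_right₀ _ (hr₂.trans_le hr₂_le).ne', div_le_div_iff₀ hr₂ hτ₂]
    linarith
  exact D2_le_D2_of_le_of_slope_le (gam_nonneg hP₁.le) hτ₂.le hw.1 hr₂ hr₂_le hslope

theorem stmt_9 (P₁ P₂ τ₁ τ₂ w : ℝ) (hP₁ : 0 < P₁) (hP₂ : 0 < P₂)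
    (hτ₁ : 0 < τ₁) (hτ₂ : 0 < τ₂)
    (hcase : τ₁ * gam P₂ ≤ τ₂ * (gam (P₁ + P₂) - gam P₂))
    (hw : w ∈ Set.Icc (0:ℝ) 1) :
    ∀ r₁ r₂ : ℝ, (r₁, r₂) ∈ C1 P₁ P₂ → 0 < r₂ → τ₂ * r₁ ≤ τ₁ * r₂ →
      D2 w τ₁ τ₂ P₁ ((τ₁ / τ₂) * gam P₂) (gam P₂) ≤ D2 w τ₁ τ₂ P₁ r₁ r₂ :=
  stmt_9_general P₁ P₂ τ₁ τ₂ w hP₁ hτ₂ hw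
end

section
/- Let P₁, P₂, τ₁, τ₂ > 0 satisfy τ₂·γ(P₁) ≤ τ₁·(γ(P₁+P₂) − γ(P₁)) (Case I). Then the union of the two sets D₁* = {(d₁, d₂) ∈ ℝ² : γ(P₁)·d₁ ≥ τ₁, d₁ ≤ d₂} and D₂* = {(d₁, d₂) ∈ ℝ² : γ(P₁)·d₁ ≥ τ₁, γ(P₂)·d₂ ≥ τ₂, d₂ ≤ d₁, γ(P₁)·d₁ + (γ(P₁+P₂) − γ(P₁))·d₂ ≥ τ₁ + τ₂} is equal to the set {(d₁, d₂) ∈ ℝ² : γ(P₁)·d₁ ≥ τ₁, γ(P₂)·d₂ ≥ τ₂, γ(P₁)·d₁ + (γ(P₁+P₂) − γ(P₁))·d₂ ≥ τ₁ + τ₂}. -/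
lemma gam_add_le {x y : ℝ} (hx : 0 ≤ x) (hy : 0 ≤ y) : gam (x + y) ≤ gam x + gam y := by
  have hmono : Real.logb 2 (1 + (x + y)) ≤ Real.logb 2 ((1 + x) * (1 + y)) :=
    Real.logb_le_logb_of_le one_lt_two (by linarith) (by nlinarith)
  have hmul : Real.logb 2 ((1 + x) * (1 + y)) = Real.logb 2 (1 + x) + Real.logb 2 (1 + y) :=
    Real.logb_mul (by positivity) (by positivity)
  unfold gam
  linarith

/-- Here `a`, `b`, `c` play the roles of γ(P₁), γ(P₁ + P₂) − γ(P₁) and γ(P₂). -/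
lemma rate_constraints_of_le {a b c τ₁ τ₂ d₁ d₂ : ℝ} (ha : 0 < a) (hb : 0 ≤ b) (hbc : b ≤ c)
    (hτ₁ : 0 ≤ τ₁) (hcase : τ₂ * a ≤ τ₁ * b) (h₁ : τ₁ ≤ a * d₁) (hd : d₁ ≤ d₂) :
    τ₂ ≤ c * d₂ ∧ τ₁ + τ₂ ≤ a * d₁ + b * d₂ := by
  have hd₁ : 0 ≤ d₁ := nonneg_of_mul_nonneg_right (hτ₁.trans h₁) ha
  have hbd : τ₂ ≤ b * d₂ := by
    refine le_of_mul_le_mul_right ?_ ha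
    calc τ₂ * a ≤ τ₁ * b := hcase
      _ ≤ a * d₁ * b := mul_le_mul_of_nonneg_right h₁ hb
      _ ≤ b * d₂ * a := by linarith [mul_le_mul_of_nonneg_left hd (mul_nonneg ha.le hb)]
  exact ⟨hbd.trans (mul_le_mul_of_nonneg_right hbc (hd₁.trans hd)), by linarith⟩

theorem stmt_10_general (P₁ P₂ τ₁ τ₂ : ℝ) (hP₁ : 0 < P₁) (hP₂ : 0 < P₂)
    (hτ₁ : 0 < τ₁)
    (hcase : τ₂ * gam P₁ ≤ τ₁ * (gam (P₁ + P₂) - gam P₁)) :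
    ({d : ℝ × ℝ | gam P₁ * d.1 ≥ τ₁ ∧ d.1 ≤ d.2} ∪
     {d : ℝ × ℝ | gam P₁ * d.1 ≥ τ₁ ∧ gam P₂ * d.2 ≥ τ₂ ∧ d.2 ≤ d.1 ∧
        gam P₁ * d.1 + (gam (P₁ + P₂) - gam P₁) * d.2 ≥ τ₁ + τ₂}) =
    {d : ℝ × ℝ | gam P₁ * d.1 ≥ τ₁ ∧ gam P₂ * d.2 ≥ τ₂ ∧
        gam P₁ * d.1 + (gam (P₁ + P₂) - gam P₁) * d.2 ≥ τ₁ + τ₂} := by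
  have hΔ : 0 ≤ gam (P₁ + P₂) - gam P₁ := sub_nonneg.2 (gam_le_gam (by linarith) (by linarith))
  have hΔle : gam (P₁ + P₂) - gam P₁ ≤ gam P₂ := by linarith [gam_add_le hP₁.le hP₂.le]
  ext d
  constructor
  · rintro (⟨h₁, hd⟩ | ⟨h₁, h₂, -, hsum⟩)
    · obtain ⟨h₂, hsum⟩ :=
        rate_constraints_of_le (gam_pos hP₁) hΔ hΔle hτ₁.le hcase h₁ hd
      exact ⟨h₁, h₂, hsum⟩
    · exact ⟨h₁, h₂, hsum⟩
  · rintro ⟨h₁, h₂, hsum⟩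
    rcases le_total d.1 d.2 with hd | hd
    · exact Or.inl ⟨h₁, hd⟩
    · exact Or.inr ⟨h₁, h₂, hd, hsum⟩

theorem stmt_10 (P₁ P₂ τ₁ τ₂ : ℝ) (hP₁ : 0 < P₁) (hP₂ : 0 < P₂)
    (hτ₁ : 0 < τ₁) (hτ₂ : 0 < τ₂)
    (hcase : τ₂ * gam P₁ ≤ τ₁ * (gam (P₁ + P₂) - gam P₁)) :
    ({d : ℝ × ℝ | gam P₁ * d.1 ≥ τ₁ ∧ d.1 ≤ d.2} ∪
     {d : ℝ × ℝ | gam P₁ * d.1 ≥ τ₁ ∧ gam P₂ * d.2 ≥ τ₂ ∧ d.2 ≤ d.1 ∧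
        gam P₁ * d.1 + (gam (P₁ + P₂) - gam P₁) * d.2 ≥ τ₁ + τ₂}) =
    {d : ℝ × ℝ | gam P₁ * d.1 ≥ τ₁ ∧ gam P₂ * d.2 ≥ τ₂ ∧
        gam P₁ * d.1 + (gam (P₁ + P₂) - gam P₁) * d.2 ≥ τ₁ + τ₂} :=
  stmt_10_general P₁ P₂ τ₁ τ₂ hP₁ hP₂ hτ₁ hcase
end

section
/- Let P₁, P₂, τ₁, τ₂ > 0 satisfy τ₁·γ(P₂) ≤ τ₂·(γ(P₁+P₂) − γ(P₂)) (Case III). Then the union of the two sets D₂* = {(d₁, d₂) ∈ ℝ² : γ(P₂)·d₂ ≥ τ₂, d₂ ≤ d₁} and D₁* = {(d₁, d₂) ∈ ℝ² : γ(P₁)·d₁ ≥ τ₁, γ(P₂)·d₂ ≥ τ₂, d₁ ≤ d₂, (γ(P₁+P₂) − γ(P₂))·d₁ + γ(P₂)·d₂ ≥ τ₁ + τ₂} is equal to the set {(d₁, d₂) ∈ ℝ² : γ(P₁)·d₁ ≥ τ₁, γ(P₂)·d₂ ≥ τ₂, (γ(P₁+P₂) − γ(P₂))·d₁ + γ(P₂)·d₂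 ≥ τ₁ + τ₂}. -/
lemma gam_lt {x y : ℝ} (hx : 0 ≤ x) (hxy : x < y) : gam x < gam y := by
  have : Real.logb 2 (1 + x) < Real.logb 2 (1 + y) :=
    Real.logb_lt_logb one_lt_two (by linarith) (by linarith)
  unfold gam; linarith

lemma gam_subadd {x y : ℝ} (hx : 0 < x) (hy : 0 < y) :
    gam (x + y) ≤ gam x + gam y := by
  have h1 : Real.logb 2 (1 + (x + y)) ≤ Real.logb 2 ((1 + x) * (1 + y)) :=
    (Real.logb_le_logb one_lt_two (by positivity) (by positivity)).mpr (by nlinarith)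
  have h2 : Real.logb 2 ((1 + x) * (1 + y)) =
      Real.logb 2 (1 + x) + Real.logb 2 (1 + y) :=
    Real.logb_mul (by positivity) (by positivity)
  unfold gam; linarith

theorem stmt_11 (P₁ P₂ τ₁ τ₂ : ℝ) (hP₁ : 0 < P₁) (hP₂ : 0 < P₂)
    (hτ₁ : 0 < τ₁) (hτ₂ : 0 < τ₂)
    (hcase : τ₁ * gam P₂ ≤ τ₂ * (gam (P₁ + P₂) - gam P₂)) :
    ({d : ℝ × ℝ | gam P₂ * d.2 ≥ τ₂ ∧ d.2 ≤ d.1} ∪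
     {d : ℝ × ℝ | gam P₁ * d.1 ≥ τ₁ ∧ gam P₂ * d.2 ≥ τ₂ ∧ d.1 ≤ d.2 ∧
        (gam (P₁ + P₂) - gam P₂) * d.1 + gam P₂ * d.2 ≥ τ₁ + τ₂}) =
    {d : ℝ × ℝ | gam P₁ * d.1 ≥ τ₁ ∧ gam P₂ * d.2 ≥ τ₂ ∧
        (gam (P₁ + P₂) - gam P₂) * d.1 + gam P₂ * d.2 ≥ τ₁ + τ₂} := by
  have hg1 : 0 < gam P₁ := gam_pos hP₁
  have hg2 : 0 < gam P₂ := gam_pos hP₂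
  have hA : 0 < gam (P₁ + P₂) - gam P₂ := by
    have := gam_lt hP₂.le (by linarith : P₂ < P₁ + P₂); linarith
  have hsub : gam (P₁ + P₂) ≤ gam P₁ + gam P₂ := gam_subadd hP₁ hP₂
  ext ⟨d₁, d₂⟩
  simp only [Set.mem_union, Set.mem_setOf_eq]
  constructor
  · rintro (⟨h1, h2⟩ | ⟨h1, h2, h3, h4⟩)
    · have hd2 : 0 < d₂ := by nlinarith
      have hg2d1 : gam P₂ * d₁ ≥ τ₂ := by nlinarith
      have hAg1 : gam (P₁ + P₂) - gam P₂ ≤ gam P₁ := by linarith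
      have key : τ₁ ≤ (gam (P₁ + P₂) - gam P₂) * d₁ := by
        have h5 : (gam (P₁ + P₂) - gam P₂) * τ₂ ≤
            (gam (P₁ + P₂) - gam P₂) * (gam P₂ * d₁) :=
          mul_le_mul_of_nonneg_left hg2d1 hA.le
        nlinarith
      refine ⟨?_, h1, by nlinarith⟩
      have h6 : τ₂ * gam P₁ ≤ gam P₂ * d₁ * gam P₁ :=
        mul_le_mul_of_nonneg_right hg2d1 hg1.le
      nlinarith
    · exact ⟨h1, h2, h4⟩
  · rintro ⟨h1, h2, h3⟩
    rcases le_total d₂ d₁ with h | h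
    · exact Or.inl ⟨h2, h⟩
    · exact Or.inr ⟨h1, h2, h, h3⟩
end

section
/- Let P₁, P₂, τ₁, τ₂ > 0 satisfy τ₁·(γ(P₁+P₂) − γ(P₁)) < τ₂·γ(P₁) and τ₂·(γ(P₁+P₂) − γ(P₂)) < τ₁·γ(P₂) (Case II), and define U = D₁* ∪ D₂*, where D₁* = {(d₁, d₂) ∈ ℝ² : γ(P₁)·d₁ ≥ τ₁, d₁ ≤ d₂, (γ(P₁+P₂) − γ(P₂))·d₁ + γ(P₂)·d₂ ≥ τ₁ + τ₂} and D₂* = {(d₁, d₂) ∈ ℝ² : γ(P₂)·d₂ ≥ τ₂, d₂ ≤ d₁, γ(P₁)·d₁ + (γ(P₁+P₂) − γ(P₁))·d₂ ≥ τ₁ + τ₂}. Then (a) every (d₁, d₂) ∈ U satisfies γ(P₁)·d₁ ≥ τ₁ and γ(P₂)·d₂ ≥ τ₂; and (b) U contains the set {(d₁, d₂) ∈ ℝ² : γ(P₁)·d₁ ≥ τ₁, γ(P₂)·d₂ ≥ τ₂, (γ(P₁+P₂) − γ(P₂))·d₁ + γ(P₂)·d₂ ≥ τ₁ + τ₂,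 γ(P₁)·d₁ + (γ(P₁+P₂) − γ(P₁))·d₂ ≥ τ₁ + τ₂}. -/
lemma gam_mono {x y : ℝ} (hx : 0 ≤ x) (hxy : x ≤ y) : gam x ≤ gam y := by
  unfold gam
  have : Real.logb 2 (1 + x) ≤ Real.logb 2 (1 + y) :=
    Real.logb_le_logb_of_le one_lt_two (by linarith) (by linarith)
  linarith

theorem stmt_12 (P₁ P₂ τ₁ τ₂ : ℝ) (hP₁ : 0 < P₁) (hP₂ : 0 < P₂)
    (hτ₁ : 0 < τ₁) (hτ₂ : 0 < τ₂)
    (hcaseA : τ₁ * (gam (P₁ + P₂) - gam P₁) < τ₂ * gam P₁)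
    (hcaseB : τ₂ * (gam (P₁ + P₂) - gam P₂) < τ₁ * gam P₂)
    (U : Set (ℝ × ℝ))
    (hU : U = {d : ℝ × ℝ | gam P₁ * d.1 ≥ τ₁ ∧ d.1 ≤ d.2 ∧
          (gam (P₁ + P₂) - gam P₂) * d.1 + gam P₂ * d.2 ≥ τ₁ + τ₂} ∪
        {d : ℝ × ℝ | gam P₂ * d.2 ≥ τ₂ ∧ d.2 ≤ d.1 ∧
          gam P₁ * d.1 + (gam (P₁ + P₂) - gam P₁) * d.2 ≥ τ₁ + τ₂}) :
    (∀ d : ℝ × ℝ, d ∈ U → gam P₁ * d.1 ≥ τ₁ ∧ gam P₂ * d.2 ≥ τ₂) ∧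
    {d : ℝ × ℝ | gam P₁ * d.1 ≥ τ₁ ∧ gam P₂ * d.2 ≥ τ₂ ∧
        (gam (P₁ + P₂) - gam P₂) * d.1 + gam P₂ * d.2 ≥ τ₁ + τ₂ ∧
        gam P₁ * d.1 + (gam (P₁ + P₂) - gam P₁) * d.2 ≥ τ₁ + τ₂} ⊆ U := by
  have h1 : 0 < gam P₁ := gam_pos hP₁
  have h2 : 0 < gam P₂ := gam_pos hP₂
  have h12 : 0 < gam (P₁ + P₂) := gam_pos (by linarith)
  have hm1 : gam P₁ ≤ gam (P₁ + P₂) := gam_mono hP₁.le (by linarith)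
  have hm2 : gam P₂ ≤ gam (P₁ + P₂) := gam_mono hP₂.le (by linarith)
  subst hU
  constructor
  · rintro ⟨d₁, d₂⟩ (⟨ha, hle, hsum⟩ | ⟨ha, hle, hsum⟩)
    · refine ⟨ha, ?_⟩
      simp only at *
      have key : gam (P₁ + P₂) * d₂ ≥ τ₁ + τ₂ := by nlinarith
      nlinarith
    · simp only at *
      refine ⟨?_, ha⟩
      have key : gam (P₁ + P₂) * d₁ ≥ τ₁ + τ₂ := by nlinarith
      nlinarith
  · rintro ⟨d₁, d₂⟩ ⟨ha, hb, hc, hd⟩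
    rcases le_total d₁ d₂ with h | h
    · exact Or.inl ⟨ha, h, hc⟩
    · exact Or.inr ⟨hb, h, hd⟩
end

section
/- Let P₁, P₂, τ₁, τ₂ > 0 satisfy τ₁·(γ(P₁+P₂) − γ(P₁)) < τ₂·γ(P₁) and τ₂·(γ(P₁+P₂) − γ(P₂)) < τ₁·γ(P₂) (Case II), and write a = γ(P₁), b = γ(P₂), s = γ(P₁+P₂). Define U = D₁* ∪ D₂*, where D₁* = {(d₁, d₂) : a·d₁ ≥ τ₁, d₁ ≤ d₂, (s−b)·d₁ + b·d₂ ≥ τ₁ + τ₂} and D₂* = {(d₁, d₂) : b·d₂ ≥ τ₂, d₂ ≤ d₁, a·d₁ + (s−a)·d₂ ≥ τ₁ + τ₂}. Then U is not convex: the points B̄ = (τ₁/a, τ₂/b + (a+b−s)·τ₁/(a·b)) and Ā = (τ₁/a + (a+b−s)·τ₂/(a·b), τ₂/b) both belong to U, but their midpoint does not belong to U. -/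
theorem stmt_13 (P₁ P₂ τ₁ τ₂ a b s : ℝ) (hP₁ : 0 < P₁) (hP₂ : 0 < P₂)
    (hτ₁ : 0 < τ₁) (hτ₂ : 0 < τ₂)
    (ha : a = gam P₁) (hb : b = gam P₂) (hs : s = gam (P₁ + P₂))
    (hcaseA : τ₁ * (s - a) < τ₂ * a) (hcaseB : τ₂ * (s - b) < τ₁ * b)
    (U : Set (ℝ × ℝ))
    (hU : U = {d : ℝ × ℝ | a * d.1 ≥ τ₁ ∧ d.1 ≤ d.2 ∧
          (s - b) * d.1 + b * d.2 ≥ τ₁ + τ₂} ∪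
        {d : ℝ × ℝ | b * d.2 ≥ τ₂ ∧ d.2 ≤ d.1 ∧
          a * d.1 + (s - a) * d.2 ≥ τ₁ + τ₂}) :
    (τ₁ / a, τ₂ / b + (a + b - s) * τ₁ / (a * b)) ∈ U ∧
    (τ₁ / a + (a + b - s) * τ₂ / (a * b), τ₂ / b) ∈ U ∧
    ((τ₁ / a + (τ₁ / a + (a + b - s) * τ₂ / (a * b))) / 2,
     ((τ₂ / b + (a + b - s) * τ₁ / (a * b)) + τ₂ / b) / 2) ∉ U := by
  have ha0 : 0 < a := by
    rw [ha, gam]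
    have : (0:ℝ) < Real.logb 2 (1 + P₁) := Real.logb_pos (by norm_num) (by linarith)
    linarith
  have hb0 : 0 < b := by
    rw [hb, gam]
    have : (0:ℝ) < Real.logb 2 (1 + P₂) := Real.logb_pos (by norm_num) (by linarith)
    linarith
  have habs : s < a + b := by
    rw [ha, hb, hs, gam, gam, gam]
    have h1 : Real.logb 2 (1 + (P₁ + P₂)) < Real.logb 2 ((1 + P₁) * (1 + P₂)) :=
      Real.logb_lt_logb (by norm_num) (by linarith) (by nlinarith)
    rw [Real.logb_mul (by positivity) (by positivity)] at h1
    linarith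
  have ha' := ha0.ne'
  have hb' := hb0.ne'
  subst hU
  refine ⟨Or.inl ⟨?_, ?_, ?_⟩, Or.inr ⟨?_, ?_, ?_⟩, ?_⟩
  · rw [mul_div_cancel₀ _ ha']
  · show τ₁ / a ≤ τ₂ / b + (a + b - s) * τ₁ / (a * b)
    have e : τ₂ / b + (a + b - s) * τ₁ / (a * b) - τ₁ / a
        = (τ₂ * a - τ₁ * (s - a)) / (a * b) := by field_simp; ring
    have h2 : (0:ℝ) ≤ (τ₂ * a - τ₁ * (s - a)) / (a * b) :=
      div_nonneg (by linarith) (by positivity)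
    linarith [e ▸ h2]
  · show (s - b) * (τ₁ / a) + b * (τ₂ / b + (a + b - s) * τ₁ / (a * b)) ≥ τ₁ + τ₂
    have e : (s - b) * (τ₁ / a) + b * (τ₂ / b + (a + b - s) * τ₁ / (a * b)) = τ₁ + τ₂ := by
      field_simp; ring
    exact ge_of_eq e
  · rw [mul_div_cancel₀ _ hb']
  · show τ₂ / b ≤ τ₁ / a + (a + b - s) * τ₂ / (a * b)
    have e : τ₁ / a + (a + b - s) * τ₂ / (a * b) - τ₂ / b
        = (τ₁ * b - τ₂ * (s - b)) / (a * b) := by field_simp; ring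
    have h2 : (0:ℝ) ≤ (τ₁ * b - τ₂ * (s - b)) / (a * b) :=
      div_nonneg (by linarith) (by positivity)
    linarith [e ▸ h2]
  · show a * (τ₁ / a + (a + b - s) * τ₂ / (a * b)) + (s - a) * (τ₂ / b) ≥ τ₁ + τ₂
    have e : a * (τ₁ / a + (a + b - s) * τ₂ / (a * b)) + (s - a) * (τ₂ / b) = τ₁ + τ₂ := by
      field_simp; ring
    exact ge_of_eq e
  · have key1 : (s - b) * ((τ₁ / a + (τ₁ / a + (a + b - s) * τ₂ / (a * b))) / 2)
        + b * ((τ₂ / b + (a + b - s) * τ₁ / (a * b) + τ₂ / b) / 2) < τ₁ + τ₂ := by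
      have e : (s - b) * ((τ₁ / a + (τ₁ / a + (a + b - s) * τ₂ / (a * b))) / 2)
          + b * ((τ₂ / b + (a + b - s) * τ₁ / (a * b) + τ₂ / b) / 2)
          = τ₁ + τ₂ + (a + b - s) * (τ₂ * (s - b) - τ₁ * b) / (2 * a * b) := by
        field_simp; ring
      have hneg : (a + b - s) * (τ₂ * (s - b) - τ₁ * b) / (2 * a * b) < 0 :=
        div_neg_of_neg_of_pos
          (mul_neg_of_pos_of_neg (by linarith) (by linarith)) (by positivity)
      rw [e]; linarith
    have key2 : a * ((τ₁ / a + (τ₁ / a + (a + b - s) * τ₂ / (a * b))) / 2)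
        + (s - a) * ((τ₂ / b + (a + b - s) * τ₁ / (a * b) + τ₂ / b) / 2) < τ₁ + τ₂ := by
      have e : a * ((τ₁ / a + (τ₁ / a + (a + b - s) * τ₂ / (a * b))) / 2)
          + (s - a) * ((τ₂ / b + (a + b - s) * τ₁ / (a * b) + τ₂ / b) / 2)
          = τ₁ + τ₂ + (a + b - s) * (τ₁ * (s - a) - τ₂ * a) / (2 * a * b) := by
        field_simp; ring
      have hneg : (a + b - s) * (τ₁ * (s - a) - τ₂ * a) / (2 * a * b) < 0 :=
        div_neg_of_neg_of_pos
          (mul_neg_of_pos_of_neg (by linarith) (by linarith)) (by positivity)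
      rw [e]; linarith
    rintro (⟨_, _, h3⟩ | ⟨_, _, h3⟩)
    · exact absurd h3 (not_le.mpr key1)
    · exact absurd h3 (not_le.mpr key2)
end

section
/- Let P₁, P₂, τ₁, τ₂ > 0 satisfy τ₂·γ(P₁) ≤ τ₁·(γ(P₁+P₂) − γ(P₁)) (Case I), write a = γ(P₁), b = γ(P₂), s = γ(P₁+P₂), and let R = {(d₁, d₂) ∈ ℝ² : a·d₁ ≥ τ₁, b·d₂ ≥ τ₂, a·d₁ + (s−a)·d₂ ≥ τ₁ + τ₂}. Set w₂ = a/s, Ā = (τ₁/a + (a+b−s)·τ₂/(a·b), τ₂/b) and B̄ = (τ₁/a, τ₂/(s−a)). Then Ā ∈ R and B̄ ∈ R, and for every w ∈ [0,1] and every (d₁, d₂) ∈ R: if w ∈ [0, w₂] then w·Ā₁ + (1−w)·Ā₂ ≤ w·d₁ + (1−w)·d₂, and if w ∈ [w₂, 1] then w·B̄₁ + (1−w)·B̄₂ ≤ w·d₁ + (1−w)·d₂. -/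
def completionRegion (a b s τ₁ τ₂ : ℝ) : Set (ℝ × ℝ) :=
  {d : ℝ × ℝ | a * d.1 ≥ τ₁ ∧ b * d.2 ≥ τ₂ ∧ a * d.1 + (s - a) * d.2 ≥ τ₁ + τ₂}

/-- `Ā`: the corner where the constraints on `b * d.2` and on the sum are tight. -/
noncomputable def vertexA (a b s τ₁ τ₂ : ℝ) : ℝ × ℝ :=
  (τ₁ / a + (a + b - s) * τ₂ / (a * b), τ₂ / b)

/-- `B̄`: the corner where the constraints on `a * d.1` and on the sum are tight. -/
noncomputable def vertexB (a s τ₁ τ₂ : ℝ) : ℝ × ℝ :=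
  (τ₁ / a, τ₂ / (s - a))

def weightedTime (w : ℝ) (d : ℝ × ℝ) : ℝ := w * d.1 + (1 - w) * d.2

section Region

variable {a b s τ₁ τ₂ : ℝ}

lemma dual_bound_of_mem_completionRegion {d : ℝ × ℝ} (hd : d ∈ completionRegion a b s τ₁ τ₂)
    {l₁ l₂ μ : ℝ} (hl₁ : 0 ≤ l₁) (hl₂ : 0 ≤ l₂) (hμ : 0 ≤ μ) :
    l₁ * τ₁ + l₂ * τ₂ + μ * (τ₁ + τ₂) ≤ (l₁ * a + μ * a) * d.1 + (l₂ * b + μ * (s - a)) * d.2 := by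
  obtain ⟨h₁, h₂, h₃⟩ := hd
  have := mul_le_mul_of_nonneg_left h₁ hl₁
  have := mul_le_mul_of_nonneg_left h₂ hl₂
  have := mul_le_mul_of_nonneg_left h₃ hμ
  linarith

lemma vertexA_mem (ha : a ≠ 0) (hb : 0 < b) (hsab : s ≤ a + b) (hτ₂ : 0 ≤ τ₂) :
    vertexA a b s τ₁ τ₂ ∈ completionRegion a b s τ₁ τ₂ := by
  have hslack : 0 ≤ (a + b - s) * τ₂ / b := by
    have : 0 ≤ a + b - s := by linarith
    positivity
  refine ⟨?_, ?_, ?_⟩ <;> simp only [vertexA, ge_iff_le]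
  · calc τ₁ ≤ τ₁ + (a + b - s) * τ₂ / b := le_add_of_nonneg_right hslack
      _ = _ := by field_simp
  · rw [mul_div_cancel₀ _ hb.ne']
  · apply le_of_eq
    field_simp
    ring

lemma vertexB_mem (ha : a ≠ 0) (hsa : a < s) (hsab : s ≤ a + b) (hτ₂ : 0 ≤ τ₂) :
    vertexB a s τ₁ τ₂ ∈ completionRegion a b s τ₁ τ₂ := by
  have hsa' : 0 < s - a := sub_pos.mpr hsa
  refine ⟨?_, ?_, ?_⟩ <;> simp only [vertexB, ge_iff_le]
  · rw [mul_div_cancel₀ _ ha]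
  · calc τ₂ = (s - a) * (τ₂ / (s - a)) := by field_simp
      _ ≤ b * (τ₂ / (s - a)) := by gcongr; linarith
  · rw [mul_div_cancel₀ _ ha, mul_div_cancel₀ _ hsa'.ne']

/-- The dual certificate uses the constraints tight at `vertexA`, with multipliers
`(0, (a - w s) / (a b), w / a)`, nonnegative exactly when `0 ≤ w ≤ a / s`. -/
lemma weightedTime_vertexA_le (ha : 0 < a) (hb : 0 < b) (hs : 0 < s)
    {w : ℝ} (hw : w ∈ Set.Icc 0 (a / s)) {d : ℝ × ℝ} (hd : d ∈ completionRegion a b s τ₁ τ₂) :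
    weightedTime w (vertexA a b s τ₁ τ₂) ≤ weightedTime w d := by
  have hws : w * s ≤ a := (le_div_iff₀ hs).mp hw.2
  have hl₂ : 0 ≤ (a - w * s) / (a * b) := div_nonneg (by linarith) (by positivity)
  have hμ : 0 ≤ w / a := div_nonneg hw.1 ha.le
  calc weightedTime w (vertexA a b s τ₁ τ₂)
        = 0 * τ₁ + (a - w * s) / (a * b) * τ₂ + w / a * (τ₁ + τ₂) := by
          simp only [weightedTime, vertexA]
          field_simp
          ring
    _ ≤ (0 * a + w / a * a) * d.1 + ((a - w * s) / (a * b) * b + w / a * (s - a)) * d.2 :=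
          dual_bound_of_mem_completionRegion hd le_rfl hl₂ hμ
    _ = weightedTime w d := by
          simp only [weightedTime]
          field_simp
          ring

/-- The dual certificate uses the constraints tight at `vertexB`, with multipliers
`((w s - a) / (a (s - a)), 0, (1 - w) / (s - a))`, nonnegative exactly when `a / s ≤ w ≤ 1`. -/
lemma weightedTime_vertexB_le (ha : 0 < a) (hsa : a < s)
    {w : ℝ} (hw : w ∈ Set.Icc (a / s) 1) {d : ℝ × ℝ} (hd : d ∈ completionRegion a b s τ₁ τ₂) :
    weightedTime w (vertexB a s τ₁ τ₂) ≤ weightedTime w d := by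
  have hsa' : 0 < s - a := sub_pos.mpr hsa
  have hws : a ≤ w * s := (div_le_iff₀ (ha.trans hsa)).mp hw.1
  have hl₁ : 0 ≤ (w * s - a) / (a * (s - a)) := div_nonneg (by linarith) (by positivity)
  have hμ : 0 ≤ (1 - w) / (s - a) := div_nonneg (by linarith [hw.2]) hsa'.le
  calc weightedTime w (vertexB a s τ₁ τ₂)
        = (w * s - a) / (a * (s - a)) * τ₁ + 0 * τ₂ + (1 - w) / (s - a) * (τ₁ + τ₂) := by
          simp only [weightedTime, vertexB]
          field_simp
          ring
    _ ≤ ((w * s - a) / (a * (s - a)) * a + (1 - w) / (s - a) * a) * d.1 +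
          (0 * b + (1 - w) / (s - a) * (s - a)) * d.2 :=
          dual_bound_of_mem_completionRegion hd hl₁ le_rfl hμ
    _ = weightedTime w d := by
          simp only [weightedTime]
          field_simp
          ring

end Region

theorem stmt_14_general (P₁ P₂ τ₁ τ₂ a b s : ℝ) (hP₁ : 0 < P₁) (hP₂ : 0 < P₂)
    (hτ₂ : 0 < τ₂)
    (ha : a = gam P₁) (hb : b = gam P₂) (hs : s = gam (P₁ + P₂))
    (R : Set (ℝ × ℝ))
    (hR : R = {d : ℝ × ℝ | a * d.1 ≥ τ₁ ∧ b * d.2 ≥ τ₂ ∧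
        a * d.1 + (s - a) * d.2 ≥ τ₁ + τ₂}) :
    (τ₁ / a + (a + b - s) * τ₂ / (a * b), τ₂ / b) ∈ R ∧
    (τ₁ / a, τ₂ / (s - a)) ∈ R ∧
    ∀ w : ℝ, w ∈ Set.Icc (0:ℝ) 1 → ∀ d : ℝ × ℝ, d ∈ R →
      (w ∈ Set.Icc (0:ℝ) (a / s) →
        w * (τ₁ / a + (a + b - s) * τ₂ / (a * b)) + (1 - w) * (τ₂ / b) ≤
          w * d.1 + (1 - w) * d.2) ∧
      (w ∈ Set.Icc (a / s) 1 →
        w * (τ₁ / a) + (1 - w) * (τ₂ / (s - a)) ≤ w * d.1 + (1 - w) * d.2) := by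
  have ha0 : 0 < a := ha ▸ gam_pos hP₁
  have hb0 : 0 < b := hb ▸ gam_pos hP₂
  have hsa : a < s := ha ▸ hs ▸ gam_lt_gam (by linarith) (lt_add_of_pos_right P₁ hP₂)
  have hsab : s ≤ a + b := ha ▸ hb ▸ hs ▸ gam_add_le hP₁.le hP₂.le
  change R = completionRegion a b s τ₁ τ₂ at hR
  subst hR
  exact ⟨vertexA_mem ha0.ne' hb0 hsab hτ₂.le, vertexB_mem ha0.ne' hsa hsab hτ₂.le,
    fun w _ d hd => ⟨fun hwA => weightedTime_vertexA_le ha0 hb0 (ha0.trans hsa) hwA hd,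
      fun hwB => weightedTime_vertexB_le ha0 hsa hwB hd⟩⟩

theorem stmt_14 (P₁ P₂ τ₁ τ₂ a b s : ℝ) (hP₁ : 0 < P₁) (hP₂ : 0 < P₂)
    (hτ₁ : 0 < τ₁) (hτ₂ : 0 < τ₂)
    (ha : a = gam P₁) (hb : b = gam P₂) (hs : s = gam (P₁ + P₂))
    (hcase : τ₂ * a ≤ τ₁ * (s - a))
    (R : Set (ℝ × ℝ))
    (hR : R = {d : ℝ × ℝ | a * d.1 ≥ τ₁ ∧ b * d.2 ≥ τ₂ ∧
        a * d.1 + (s - a) * d.2 ≥ τ₁ + τ₂}) :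
    (τ₁ / a + (a + b - s) * τ₂ / (a * b), τ₂ / b) ∈ R ∧
    (τ₁ / a, τ₂ / (s - a)) ∈ R ∧
    ∀ w : ℝ, w ∈ Set.Icc (0:ℝ) 1 → ∀ d : ℝ × ℝ, d ∈ R →
      (w ∈ Set.Icc (0:ℝ) (a / s) →
        w * (τ₁ / a + (a + b - s) * τ₂ / (a * b)) + (1 - w) * (τ₂ / b) ≤
          w * d.1 + (1 - w) * d.2) ∧
      (w ∈ Set.Icc (a / s) 1 →
        w * (τ₁ / a) + (1 - w) * (τ₂ / (s - a)) ≤ w * d.1 + (1 - w) * d.2) :=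
  stmt_14_general P₁ P₂ τ₁ τ₂ a b s hP₁ hP₂ hτ₂ ha hb hs R hR
end

section
/- Let P₁, P₂, τ₁, τ₂ > 0 satisfy τ₁·γ(P₂) ≤ τ₂·(γ(P₁+P₂) − γ(P₂)) (Case III), write a = γ(P₁), b = γ(P₂), s = γ(P₁+P₂), and let R = {(d₁, d₂) ∈ ℝ² : a·d₁ ≥ τ₁, b·d₂ ≥ τ₂, (s−b)·d₁ + b·d₂ ≥ τ₁ + τ₂}. Then the point (τ₂/b, τ₂/b) belongs to R, and for every (d₁, d₂) ∈ R one has max{d₁, d₂} ≥ τ₂/b; in other words, the minimum over R of max{d₁, d₂} equals τ₂/γ(P₂). -/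
theorem stmt_19 (P₁ P₂ τ₁ τ₂ a b s : ℝ) (hP₁ : 0 < P₁) (hP₂ : 0 < P₂)
    (hτ₁ : 0 < τ₁) (hτ₂ : 0 < τ₂)
    (ha : a = gam P₁) (hb : b = gam P₂) (hs : s = gam (P₁ + P₂))
    (hcase : τ₁ * b ≤ τ₂ * (s - b))
    (R : Set (ℝ × ℝ))
    (hR : R = {d : ℝ × ℝ | a * d.1 ≥ τ₁ ∧ b * d.2 ≥ τ₂ ∧
        (s - b) * d.1 + b * d.2 ≥ τ₁ + τ₂}) :
    (τ₂ / b, τ₂ / b) ∈ R ∧ ∀ d : ℝ × ℝ, d ∈ R → τ₂ / b ≤ max d.1 d.2 := by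
  have hbpos : 0 < b := by
    rw [hb, gam]
    have : (0:ℝ) < Real.logb 2 (1 + P₂) :=
      Real.logb_pos one_lt_two (by linarith)
    linarith
  have hab : s - b ≤ a := by
    simp only [ha, hb, hs, gam]
    have h1 : (0:ℝ) < 1 + P₁ := by linarith
    have h2 : (0:ℝ) < 1 + P₂ := by linarith
    have key : Real.logb 2 (1 + (P₁ + P₂)) ≤
        Real.logb 2 (1 + P₁) + Real.logb 2 (1 + P₂) := by
      rw [← Real.logb_mul (ne_of_gt h1) (ne_of_gt h2)]
      have : (1 + (P₁ + P₂)) ≤ (1 + P₁) * (1 + P₂) := by nlinarith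
      exact Real.logb_le_logb_of_le one_lt_two (by linarith) this
    linarith
  -- τ₁ ≤ (s - b) * (τ₂ / b)
  have hkey : τ₁ ≤ (s - b) * (τ₂ / b) := by
    rw [show (s - b) * (τ₂ / b) = τ₂ * (s - b) / b by ring, le_div_iff₀ hbpos]
    nlinarith
  have hmem : (τ₂ / b, τ₂ / b) ∈ R := by
    rw [hR]
    refine ⟨?_, ?_, ?_⟩
    · have : (s - b) * (τ₂ / b) ≤ a * (τ₂ / b) := by
        apply mul_le_mul_of_nonneg_right hab
        positivity
      simpa using le_trans hkey this
    · simp only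
      rw [mul_div_cancel₀ _ (ne_of_gt hbpos)]
    · have : b * (τ₂ / b) = τ₂ := mul_div_cancel₀ _ (ne_of_gt hbpos)
      simp only
      rw [this]
      linarith
  refine ⟨hmem, fun d hd => ?_⟩
  rw [hR] at hd
  obtain ⟨-, h2, -⟩ := hd
  have : τ₂ / b ≤ d.2 := by
    rw [div_le_iff₀ hbpos]
    linarith [h2]
  exact le_trans this (le_max_right _ _)
end
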